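/- Let c ≥ 3 be an odd integer, ℓ ≥ 1, and let t = ∑_{k=0}^{ℓ} t_k·c^{−k} ∈ [0,1] with digits t_0,…,t_ℓ ∈ {0,…,c−1}. Let A be a real m×n matrix and let p : {1,…,n} → [0,1] be the constant floating coloring with p(j) = t for all j. Then there exists a floating coloring p' : {1,…,n} → M_{c,ℓ−1} such that d_A(p, p') ≤ c^{−ℓ+1} · min{t_ℓ, c − t_ℓ} · herdisc(A, c). -/
import Mathlib


open Finset

/-- `c`-color discrepancy of a matrix: minimum over `c`-colorings `p` of the columns of the
maximum over colors `d` and rows `i` of `|∑_{j : p j = d} A i j - (1/c) ∑_j A i j|`. -/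
noncomputable def mdisc {ι κ : Type*} [Fintype ι] [Fintype κ] (A : ι → κ → ℝ) (c : ℕ) : ℝ :=
  ⨅ p : κ → Fin c, ⨆ d : Fin c, ⨆ i : ι,
    |∑ j ∈ Finset.univ.filter (fun j => p j = d), A i j - (1 / (c : ℝ)) * ∑ j, A i j|

/-- hereditary `c`-color discrepancy: maximum of `mdisc` over all nonempty column submatrices. -/
noncomputable def mherdisc {ι : Type*} [Fintype ι] {n : ℕ} (A : ι → Fin n → ℝ) (c : ℕ) : ℝ :=
  ⨆ J : {J : Finset (Fin n) // J.Nonempty}, mdisc (fun i (j : {x // x ∈ J.1}) => A i j.1) c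

/-- `d_A(p,q) = max_i |∑_j a_{ij} (p j - q j)|` for floating colorings `p, q`. -/
noncomputable def dA {ι κ : Type*} [Fintype ι] [Fintype κ] (A : ι → κ → ℝ) (p q : κ → ℝ) : ℝ :=
  ⨆ i : ι, |∑ j, A i j * (p j - q j)|

/-- weighted discrepancy with weight `z`: min over `{0,1}`-colorings `q` of `d_A(z·1, q)`. -/
noncomputable def wdisc {ι κ : Type*} [Fintype ι] [Fintype κ] (A : ι → κ → ℝ) (z : ℝ) : ℝ :=
  ⨅ q : κ → Bool, dA A (fun _ => z) (fun j => if q j then 1 else 0)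

/-- `M_{c,ℓ}`: numbers in `[0,1]` with a `c`-ary expansion `∑_{i=0}^ℓ a_i c^{-i}`,
with digits `a_i ∈ {0, …, c-1}`. -/
def Mset (c ℓ : ℕ) : Set ℝ :=
  {x | x ∈ Set.Icc (0:ℝ) 1 ∧
    ∃ a : Fin (ℓ+1) → ℕ, (∀ i, a i < c) ∧ x = ∑ i, (a i : ℝ) / (c : ℝ) ^ (i : ℕ)}

lemma mem_Mset_of_le {c : ℕ} (hc : 2 ≤ c) :
    ∀ (L N : ℕ), N ≤ c ^ L → ((N : ℝ) / (c : ℝ) ^ L) ∈ Mset c L := by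
  have hc0 : 0 < c := by omega
  have hcR : (0:ℝ) < c := by exact_mod_cast hc0
  intro L
  induction L with
  | zero =>
    intro N hN
    have hN1 : N ≤ 1 := by simpa using hN
    refine ⟨⟨by positivity, by simpa using by exact_mod_cast hN1⟩, fun _ => N,
      fun i => by simp only []; omega, ?_⟩
    simp
  | succ L ih =>
    intro N hN
    have hN' : N ≤ c ^ L * c := by rwa [pow_succ] at hN
    have hq : N / c ≤ c ^ L := by
      have h2 : N / c ≤ c ^ L * c / c := Nat.div_le_div_right hN'
      rwa [Nat.mul_div_cancel _ hc0] at h2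
    obtain ⟨hIcc, b, hb, hsum⟩ := ih (N / c) hq
    refine ⟨⟨by positivity, ?_⟩, Fin.snoc b (N % c), ?_, ?_⟩
    · rw [div_le_one (by positivity)]
      exact_mod_cast hN
    · intro i
      refine Fin.lastCases ?_ ?_ i
      · simp [Nat.mod_lt _ hc0]
      · intro j; simpa using hb j
    · rw [Fin.sum_univ_castSucc]
      simp only [Fin.snoc_castSucc, Fin.snoc_last, Fin.coe_castSucc, Fin.val_last]
      rw [← hsum]
      have hmod : (c : ℝ) * ((N / c : ℕ) : ℝ) + ((N % c : ℕ) : ℝ) = (N : ℝ) := by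
        exact_mod_cast Nat.div_add_mod N c
      rw [← hmod, pow_succ]
      field_simp

lemma exists_good_coloring {m n : ℕ} (hm : 0 < m) (hn : 0 < n) (A : Fin m → Fin n → ℝ)
    (c : ℕ) (hc : 3 ≤ c) :
    ∃ p : Fin n → Fin c, ∀ (d : Fin c) (i : Fin m),
      |∑ j ∈ univ.filter (fun j => p j = d), A i j - (1 / (c : ℝ)) * ∑ j, A i j|
        ≤ mherdisc A c := by
  haveI : NeZero c := ⟨by omega⟩
  haveI : Nonempty (Fin n) := ⟨⟨0, hn⟩⟩
  haveI : Nonempty (Fin m) := ⟨⟨0, hm⟩⟩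
  set F : (Fin n → Fin c) → ℝ := fun p => ⨆ d : Fin c, ⨆ i : Fin m,
    |∑ j ∈ univ.filter (fun j => p j = d), A i j - (1 / (c : ℝ)) * ∑ j, A i j| with hF
  obtain ⟨p0, hp0⟩ := Finite.exists_min F
  have hle1 : F p0 ≤ mdisc A c := le_ciInf hp0
  -- mdisc A c ≤ mherdisc A c
  set J : {J : Finset (Fin n) // J.Nonempty} := ⟨univ, univ_nonempty⟩ with hJ
  set B : Fin m → {x // x ∈ (univ : Finset (Fin n))} → ℝ := fun i j => A i j.1 with hB
  let e : {x // x ∈ (univ : Finset (Fin n))} ≃ Fin n := Equiv.subtypeUnivEquiv (fun x => mem_univ x)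
  have hle2 : mdisc A c ≤ mdisc B c := by
    apply le_ciInf
    intro p'
    have hbdd : BddBelow (Set.range fun p : Fin n → Fin c => F p) :=
      Set.Finite.bddBelow (Set.finite_range _)
    refine le_trans (ciInf_le hbdd (p' ∘ e.symm)) (le_of_eq ?_)
    simp only [hF]
    refine iSup_congr fun d => iSup_congr fun i => ?_
    congr 1
    have h1 : ∑ j ∈ univ.filter (fun j : Fin n => p' (e.symm j) = d), A i j
        = ∑ j ∈ univ.filter (fun j : {x // x ∈ (univ : Finset (Fin n))} => p' j = d), B i j := by
      rw [sum_filter, sum_filter]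
      exact (Fintype.sum_equiv e _ _ (fun x => rfl)).symm
    have h2 : ∑ j : Fin n, A i j = ∑ j, B i j :=
      (Fintype.sum_equiv e _ _ (fun x => rfl)).symm
    simp only [Function.comp_apply]
    rw [h1, h2]
  have hle3 : mdisc B c ≤ mherdisc A c :=
    le_ciSup (f := fun J : {J : Finset (Fin n) // J.Nonempty} =>
      mdisc (fun i (j : {x // x ∈ J.1}) => A i j.1) c)
      (Set.Finite.bddAbove (Set.finite_range _)) J
  refine ⟨p0, fun d i => ?_⟩
  have h4 : |∑ j ∈ univ.filter (fun j => p0 j = d), A i j - (1 / (c : ℝ)) * ∑ j, A i j|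
      ≤ F p0 := by
    refine le_trans (le_ciSup (f := fun i : Fin m =>
      |∑ j ∈ univ.filter (fun j => p0 j = d), A i j - (1 / (c : ℝ)) * ∑ j, A i j|)
      (Set.Finite.bddAbove (Set.finite_range _)) i) ?_
    exact le_ciSup (f := fun d : Fin c => ⨆ i : Fin m,
      |∑ j ∈ univ.filter (fun j => p0 j = d), A i j - (1 / (c : ℝ)) * ∑ j, A i j|)
      (Set.Finite.bddAbove (Set.finite_range _)) d
  exact h4.trans (hle1.trans (hle2.trans hle3))

lemma card_filter_val_lt (c s : ℕ) (hs : s ≤ c) :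
    (univ.filter (fun d : Fin c => (d : ℕ) < s)).card = s := by
  rw [Finset.card_filter, Fin.sum_univ_eq_sum_range (fun k => if k < s then (1:ℕ) else 0)]
  rw [← Finset.sum_subset (Finset.range_subset_range.2 hs)
    (fun x _ hx => by simp only [Finset.mem_range, not_lt] at hx; rw [if_neg (by omega)])]
  rw [Finset.sum_ite_of_true (by intro x hx; simpa using hx)]
  simp

lemma key_bound {m n c : ℕ} (A : Fin m → Fin n → ℝ) (M : ℝ)
    (p : Fin n → Fin c)
    (hp : ∀ (d : Fin c) (i : Fin m),
      |∑ j ∈ univ.filter (fun j => p j = d), A i j - (1/(c:ℝ)) * ∑ j, A i j| ≤ M)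
    (s : ℕ) (hs : s ≤ c) (i : Fin m) :
    |∑ j ∈ univ.filter (fun j => (p j : ℕ) < s), A i j - ((s:ℝ)/c) * ∑ j, A i j|
      ≤ s * M := by
  have hcard := card_filter_val_lt c s hs
  have h1 : ∑ j ∈ univ.filter (fun j => (p j : ℕ) < s), A i j
      = ∑ d ∈ univ.filter (fun d : Fin c => (d:ℕ) < s),
          ∑ j ∈ univ.filter (fun j => p j = d), A i j := by
    rw [Finset.sum_fiberwise_eq_sum_filter]
    apply Finset.sum_congr _ (fun _ _ => rfl)
    apply Finset.filter_congr
    intro j _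
    simp
  have h2 : ((s:ℝ)/c) * ∑ j, A i j
      = ∑ _d ∈ univ.filter (fun d : Fin c => (d:ℕ) < s), (1/(c:ℝ)) * ∑ j, A i j := by
    rw [Finset.sum_const, hcard, nsmul_eq_mul]
    ring
  rw [h1, h2, ← Finset.sum_sub_distrib]
  refine (Finset.abs_sum_le_sum_abs _ _).trans ?_
  calc ∑ d ∈ univ.filter (fun d : Fin c => (d:ℕ) < s),
        |∑ j ∈ univ.filter (fun j => p j = d), A i j - (1/(c:ℝ)) * ∑ j, A i j|
      ≤ ∑ _d ∈ univ.filter (fun d : Fin c => (d:ℕ) < s), M :=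
        Finset.sum_le_sum fun d _ => hp d i
    _ = s * M := by rw [Finset.sum_const, hcard, nsmul_eq_mul]

/-- Refined rounding lemma -/
theorem rounding_digitwise {m n : ℕ} (hm : 0 < m) (hn : 0 < n)
    (A : Fin m → Fin n → ℝ) (c ℓ : ℕ) (hc : 3 ≤ c) (hodd : Odd c) (hl : 1 ≤ ℓ)
    (td : Fin (ℓ + 1) → ℕ) (htd : ∀ k, td k < c) (t : ℝ)
    (ht01 : t ∈ Set.Icc (0:ℝ) 1)
    (ht : t = ∑ k, (td k : ℝ) / (c : ℝ) ^ (k : ℕ)) :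
    ∃ p' : Fin n → ℝ, (∀ j, p' j ∈ Mset c (ℓ - 1)) ∧
      dA A (fun _ => t) p' ≤
        (c : ℝ) ^ ((1 : ℤ) - ℓ) * ((min (td (Fin.last ℓ)) (c - td (Fin.last ℓ)) : ℕ) : ℝ) *
          mherdisc A c := by
  haveI : Nonempty (Fin m) := ⟨⟨0, hm⟩⟩
  have hcR : (0:ℝ) < (c:ℝ) := by exact_mod_cast (by omega : 0 < c)
  set C := (c:ℝ) with hC
  set tl := td (Fin.last ℓ) with htldef
  have htlc : tl < c := htd _
  set s := min tl (c - tl) with hsdef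
  have hsc : s ≤ c := by omega
  obtain ⟨p, hp⟩ := exists_good_coloring hm hn A c hc
  set M := mherdisc A c with hM
  set u := C ^ ((1 : ℤ) - ℓ) with hudef
  have hu : u = 1 / C ^ (ℓ - 1 : ℕ) := by
    rw [hudef, show (1:ℤ) - ℓ = -((ℓ - 1 : ℕ) : ℤ) by omega, zpow_neg, zpow_natCast, one_div]
  have hup : 0 < u := by rw [hu]; positivity
  have hCpow : C ^ (ℓ - 1 : ℕ) * C = C ^ ℓ := by rw [← pow_succ]; congr 1; omega
  have hu2 : u = C / C ^ ℓ := by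
    rw [hu, div_eq_div_iff (by positivity) (by positivity), one_mul, ← hCpow]; ring
  set t' := ∑ k : Fin ℓ, (td k.castSucc : ℝ) / C ^ (k : ℕ) with ht'def
  have hsplit : t = t' + (tl : ℝ) / C ^ ℓ := by
    rw [ht, Fin.sum_univ_castSucc]
    simp [ht'def, htldef]
  have ht'nonneg : 0 ≤ t' := by
    apply Finset.sum_nonneg; intro k _; positivity
  have ht'le : t' ≤ t := by
    rw [hsplit]
    have h0 : (0:ℝ) ≤ (tl:ℝ) / C ^ ℓ := by positivity
    linarith
  have ht'le1 : t' ≤ 1 := ht'le.trans ht01.2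
  -- N yielding t'
  set N := ∑ k : Fin ℓ, td k.castSucc * c ^ (ℓ - 1 - (k:ℕ)) with hNdef
  have hNt' : ((N : ℕ) : ℝ) / C ^ (ℓ - 1 : ℕ) = t' := by
    rw [hNdef, ht'def]
    push_cast
    rw [Finset.sum_div]
    refine Finset.sum_congr rfl fun k _ => ?_
    have hek : ℓ - 1 - (k:ℕ) + (k:ℕ) = ℓ - 1 := by omega
    rw [div_eq_div_iff (by positivity) (by positivity), mul_assoc, ← pow_add, hek]
  have hNle : N ≤ c ^ (ℓ - 1) := by
    have h1 : ((N : ℕ) : ℝ) ≤ (c:ℝ) ^ (ℓ - 1 : ℕ) := by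
      rw [← div_le_one (by positivity : (0:ℝ) < C ^ (ℓ - 1 : ℕ))] at *
      rw [hNt']; exact ht'le1
    exact_mod_cast h1
  have hMlow : t' ∈ Mset c (ℓ - 1) := by
    rw [← hNt']; exact mem_Mset_of_le (by omega) _ _ hNle
  have hMhigh : 1 ≤ tl → t' + u ∈ Mset c (ℓ - 1) := by
    intro h1
    have ht'lt : t' < 1 := by
      have h1R : (1:ℝ) ≤ (tl:ℝ) := by exact_mod_cast h1
      have hpos : (0:ℝ) < C ^ ℓ := by positivity
      have hle : (1:ℝ) / C ^ ℓ ≤ (tl:ℝ) / C ^ ℓ := by gcongr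
      have h2 : (0:ℝ) < 1 / C ^ ℓ := by positivity
      have h3 := ht01.2
      rw [hsplit] at h3
      linarith
    have hNlt : N + 1 ≤ c ^ (ℓ - 1) := by
      have h2 : ((N : ℕ) : ℝ) < (c:ℝ) ^ (ℓ - 1 : ℕ) := by
        rw [← div_lt_one (by positivity : (0:ℝ) < C ^ (ℓ - 1 : ℕ))] at *
        rw [hNt']; exact ht'lt
      have : N < c ^ (ℓ - 1) := by exact_mod_cast h2
      omega
    have := mem_Mset_of_le (by omega : 2 ≤ c) (ℓ - 1) (N + 1) hNlt
    have heq : ((N + 1 : ℕ) : ℝ) / C ^ (ℓ - 1 : ℕ) = t' + u := by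
      push_cast
      rw [add_div, hNt', hu]
    rwa [heq] at this
  -- per-row sums, two cases
  by_cases hcase : tl ≤ c - tl
  · have hstl : s = tl := by omega
    refine ⟨fun j => if ((p j : ℕ) < s) then t' + u else t', fun j => ?_, ?_⟩
    · by_cases h : (p j : ℕ) < s
      · simp only [h, if_true]; exact hMhigh (by omega)
      · simp only [h, if_false]; exact hMlow
    · have hkey : ∀ i : Fin m,
          |∑ j, A i j * (t - (if ((p j : ℕ) < s) then t' + u else t'))| ≤ u * (s:ℝ) * M := by
        intro i
        have hterm : ∀ j, A i j * (t - (if ((p j : ℕ) < s) then t' + u else t'))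
            = A i j * ((tl:ℝ) / C ^ ℓ) - (if ((p j : ℕ) < s) then u * A i j else 0) := by
          intro j
          by_cases h : (p j : ℕ) < s <;> simp only [h, if_true, if_false, hsplit] <;> ring
        rw [Finset.sum_congr rfl fun j _ => hterm j, Finset.sum_sub_distrib,
          ← Finset.sum_filter, ← Finset.sum_mul, ← Finset.mul_sum]
        have hscal : (tl:ℝ) / C ^ ℓ = u * ((s:ℝ) / C) := by
          rw [hstl, hu, div_mul_div_comm, one_mul, hCpow]
        have hid : (∑ j, A i j) * ((tl:ℝ) / C ^ ℓ)
              - u * ∑ j ∈ univ.filter (fun j => (p j : ℕ) < s), A i j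
            = -(u * ((∑ j ∈ univ.filter (fun j => (p j : ℕ) < s), A i j)
              - ((s:ℝ) / C) * ∑ j, A i j)) := by
          rw [hscal]; ring
        rw [hid, abs_neg, abs_mul, abs_of_pos hup, mul_assoc]
        exact mul_le_mul_of_nonneg_left (key_bound A M p hp s hsc i) hup.le
      refine ciSup_le fun i => ?_
      exact hkey i
  · have hstl : s = c - tl := by omega
    have htl1 : 1 ≤ tl := by omega
    have hscast : ((s:ℕ):ℝ) = C - (tl:ℝ) := by
      rw [hstl]; push_cast [Nat.cast_sub htlc.le]; ring
    refine ⟨fun j => if ((p j : ℕ) < s) then t' else t' + u, fun j => ?_, ?_⟩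
    · by_cases h : (p j : ℕ) < s
      · simp only [h, if_true]; exact hMlow
      · simp only [h, if_false]; exact hMhigh htl1
    · have hkey : ∀ i : Fin m,
          |∑ j, A i j * (t - (if ((p j : ℕ) < s) then t' else t' + u))| ≤ u * (s:ℝ) * M := by
        intro i
        have hterm : ∀ j, A i j * (t - (if ((p j : ℕ) < s) then t' else t' + u))
            = A i j * ((tl:ℝ) / C ^ ℓ - u) + (if ((p j : ℕ) < s) then u * A i j else 0) := by
          intro j
          by_cases h : (p j : ℕ) < s <;> simp only [h, if_true, if_false, hsplit] <;> ring
        rw [Finset.sum_congr rfl fun j _ => hterm j, Finset.sum_add_distrib,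
          ← Finset.sum_filter, ← Finset.sum_mul, ← Finset.mul_sum]
        have hscal : (tl:ℝ) / C ^ ℓ - u = -(u * ((s:ℝ) / C)) := by
          rw [hscast, hu2]
          field_simp
          ring
        have hid : (∑ j, A i j) * ((tl:ℝ) / C ^ ℓ - u)
              + u * ∑ j ∈ univ.filter (fun j => (p j : ℕ) < s), A i j
            = u * ((∑ j ∈ univ.filter (fun j => (p j : ℕ) < s), A i j)
              - ((s:ℝ) / C) * ∑ j, A i j) := by
          rw [hscal]; ring
        rw [hid, abs_mul, abs_of_pos hup, mul_assoc]
        exact mul_le_mul_of_nonneg_left (key_bound A M p hp s hsc i) hup.le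
      refine ciSup_le fun i => ?_
      exact hkey i
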